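/- arXiv:2112.05946 — 2 statements merged into one kernel-verified Lean document; each statement's English description precedes it below -/
import Mathlib

section
/- Let E be a real inner product space, ι a finite index type, e : ι → E an orthonormal family, g ∈ E, and c : ι → ℝ with c(i) ≥ 0 for all i. Set u(i) = ⟨g, e(i)⟩. Then the function F(v) = ½·‖Σ_i v(i)·e(i) − g‖² + Σ_i c(i)·|v(i)| over v : ι → ℝ has a unique global minimizer v*, given by v*(i) = sign(u(i))·max(|u(i)| − c(i), 0). -/
open scoped RealInnerProductSpace

lemma soft_aux (u c : ℝ) (hc : 0 ≤ c) (t : ℝ) :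
    (1/2) * (Real.sign u * max (|u| - c) 0)^2 - u * (Real.sign u * max (|u| - c) 0)
      + c * |Real.sign u * max (|u| - c) 0| + (1/2)*(t - Real.sign u * max (|u| - c) 0)^2
    ≤ (1/2)*t^2 - u*t + c*|t| := by
  rcases le_or_gt (|u|) c with h | h
  · have hs0 : Real.sign u * max (|u| - c) 0 = 0 := by
      simp [max_eq_right (sub_nonpos.mpr h)]
    rw [hs0]
    have h1 : u * t ≤ c * |t| := calc
      u * t ≤ |u * t| := le_abs_self _
      _ = |u| * |t| := abs_mul _ _
      _ ≤ c * |t| := mul_le_mul_of_nonneg_right h (abs_nonneg t)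
    simp only [abs_zero, mul_zero, sub_zero]
    nlinarith
  · have hu0 : u ≠ 0 := by
      intro h0; rw [h0, abs_zero] at h; linarith
    have hm : max (|u| - c) 0 = |u| - c := max_eq_left (by linarith)
    rcases lt_or_gt_of_ne hu0 with h' | h'
    · have hsg : Real.sign u = -1 := Real.sign_of_neg h'
      have ha : |u| = -u := abs_of_neg h'
      rw [hsg, hm, ha]
      have hsabs : |(-1 : ℝ) * (-u - c)| = -(-1 * (-u - c)) := by
        rw [abs_of_nonpos]; nlinarith
      rw [hsabs]
      nlinarith [neg_abs_le t, abs_nonneg t]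
    · have hsg : Real.sign u = 1 := Real.sign_of_pos h'
      have ha : |u| = u := abs_of_pos h'
      rw [hsg, hm, ha]
      have hsabs : |(1 : ℝ) * (u - c)| = 1 * (u - c) := by
        rw [abs_of_nonneg]; nlinarith
      rw [hsabs]
      nlinarith [le_abs_self t, abs_nonneg t]

/-- Hilbert-space form of the Lasso filter theorem: minimizing the squared
distance of a truncated orthonormal expansion to a target plus componentwise
L¹ penalties yields soft-thresholding of the projection coefficients. -/
theorem lasso_filter_minimizer_inner
    {E : Type*} [NormedAddCommGroup E] [InnerProductSpace ℝ E]
    {ι : Type*} [Fintype ι]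
    (e : ι → E) (he : Orthonormal ℝ e)
    (g : E) (c : ι → ℝ) (hc : ∀ i, 0 ≤ c i)
    (u : ι → ℝ) (hu : ∀ i, u i = ⟪g, e i⟫)
    (F : (ι → ℝ) → ℝ)
    (hF : ∀ v, F v = (1 / 2) * ‖(∑ i, v i • e i) - g‖ ^ 2 + ∑ i, c i * |v i|)
    (vstar : ι → ℝ)
    (hvstar : ∀ i, vstar i = Real.sign (u i) * max (|u i| - c i) 0) :
    (∀ v, F vstar ≤ F v) ∧ (∀ v, v ≠ vstar → F vstar < F v) := by
  -- expansion of F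
  have hexp : ∀ v : ι → ℝ, F v
      = (∑ i, ((1/2)*(v i)^2 - u i * v i + c i * |v i|)) + (1/2)*‖g‖^2 := by
    intro v
    have hnorm : ‖(∑ i, v i • e i) - g‖^2
        = ‖∑ i, v i • e i‖^2 - 2 * ⟪∑ i, v i • e i, g⟫ + ‖g‖^2 := by
      rw [norm_sub_sq_real]
    have hns : ‖∑ i, v i • e i‖^2 = ∑ i, (v i)^2 := by
      rw [← real_inner_self_eq_norm_sq]
      rw [he.inner_sum v v Finset.univ]; simp [sq]
    have hip : ⟪∑ i, v i • e i, g⟫ = ∑ i, u i * v i := by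
      rw [sum_inner]
      refine Finset.sum_congr rfl fun i _ => ?_
      rw [real_inner_smul_left, hu i, real_inner_comm]; ring
    have hsum : ∑ i, ((1/2)*(v i)^2 - u i * v i + c i * |v i|)
        = (1/2)*(∑ i, (v i)^2) - (∑ i, u i * v i) + ∑ i, c i * |v i| := by
      rw [Finset.sum_add_distrib, Finset.sum_sub_distrib, Finset.mul_sum]
    rw [hF, hnorm, hns, hip, hsum]; ring
  have key : ∀ v : ι → ℝ,
      F vstar + ∑ i, (1/2)*(v i - vstar i)^2 ≤ F v := by
    intro v
    rw [hexp v, hexp vstar]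
    have hterm : ∀ i ∈ Finset.univ,
        ((1/2)*(vstar i)^2 - u i * vstar i + c i * |vstar i|) + (1/2)*(v i - vstar i)^2
        ≤ (1/2)*(v i)^2 - u i * (v i) + c i * |v i| := by
      intro i _
      rw [hvstar i]
      exact soft_aux (u i) (c i) (hc i) (v i)
    have := Finset.sum_le_sum hterm
    rw [Finset.sum_add_distrib] at this
    linarith
  constructor
  · intro v
    have h0 : (0:ℝ) ≤ ∑ i, (1/2)*(v i - vstar i)^2 :=
      Finset.sum_nonneg fun i _ => by positivity
    linarith [key v]
  · intro v hv
    obtain ⟨i, hi⟩ : ∃ i, v i ≠ vstar i := by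
      by_contra hne; push_neg at hne
      exact hv (funext hne)
    have h0 : (0:ℝ) < ∑ i, (1/2)*(v i - vstar i)^2 := by
      refine Finset.sum_pos' (fun j _ => by positivity) ⟨i, Finset.mem_univ i, ?_⟩
      have : v i - vstar i ≠ 0 := sub_ne_zero.mpr hi
      positivity
    linarith [key v]
end

section
/- Let ι be a nonempty finite index set, ρ : ι → ℝ, and let ρ̄ ∈ ℝ and ε ∈ ℝ satisfy ε ≤ ρ̄. Let ρ_min = min_{l ∈ ι} ρ(l) and assume ρ_min < ρ̄. Define β = min((ρ̄ − ε)/(ρ̄ − ρ_min), 1) and the limited values ρ*(l) = β·(ρ(l) − ρ̄) + ρ̄. Then ρ*(l) ≥ ε for every l ∈ ι. -/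
/-- The positivity-preserving slope limiter: contracting the point values
toward the element mean by the factor β = min((ρ̄ − ε)/(ρ̄ − ρ_min), 1) bounds
all limited point values below by ε. -/
theorem slope_limiter_positivity
    {ι : Type*} [Fintype ι] [Nonempty ι]
    (ρ : ι → ℝ) (ρbar ε : ℝ) (hε : ε ≤ ρbar)
    (ρmin : ℝ) (hρmin : ρmin = Finset.univ.inf' Finset.univ_nonempty ρ)
    (hlt : ρmin < ρbar)
    (β : ℝ) (hβ : β = min ((ρbar - ε) / (ρbar - ρmin)) 1)
    (ρstar : ι → ℝ) (hρstar : ∀ l, ρstar l = β * (ρ l - ρbar) + ρbar) :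
    ∀ l, ε ≤ ρstar l := by
  intro l
  have hpos : 0 < ρbar - ρmin := by linarith
  have hβ0 : 0 ≤ β := by
    rw [hβ]
    exact le_min (div_nonneg (by linarith) hpos.le) one_pos.le
  have hβle : β ≤ (ρbar - ε) / (ρbar - ρmin) := hβ ▸ min_le_left _ _
  have hmin : ρmin ≤ ρ l := by
    rw [hρmin]; exact Finset.inf'_le _ (Finset.mem_univ l)
  rw [hρstar]
  rcases le_or_gt ρbar (ρ l) with h | h
  · have hβ1 : β ≤ 1 := hβ ▸ min_le_right _ _
    nlinarith
  · have key : β * (ρbar - ρ l) ≤ β * (ρbar - ρmin) :=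
      mul_le_mul_of_nonneg_left (by linarith) hβ0
    have : β * (ρbar - ρmin) ≤ ρbar - ε := by
      rw [← le_div_iff₀ hpos]
      exact hβle
    linarith
end
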